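/- arXiv:2303.17497 — 5 statements merged into one kernel-verified Lean document; each statement's English description precedes it below -/
import Mathlib

section
/- For every subgroup L ⊆ ℤ^n, the lattice ideal I_{Λ(L)} of the Lawrence lifting Λ(L) ⊆ ℤ^{2n}, computed in S = k[x_1,…,x_n,y_1,…,y_n] (with the first n variables the x's and the last n variables the y's), is equal to the Lawrence ideal J_L; that is, ⟨ x^{a_1} y^{a_2} − x^{b_1} y^{b_2} : a_1,a_2,b_1,b_2 ∈ ℕ^n, (a_1 − b_1, a_2 − b_2) ∈ Λ(L) ⟩ = ⟨ x^a y^b − x^b y^a : a, b ∈ ℕ^n, a − b ∈ L ⟩. -/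
open MvPolynomial

/-- The Lawrence lifting `Λ(L) = {(u, −u) : u ∈ L} ⊆ ℤ^{2n}`, where `ℤ^{2n}` is
indexed by `Fin n ⊕ Fin n` (the first summand for the `x`-variables, the second
for the `y`-variables). -/
def lawrenceLifting (n : ℕ) (L : AddSubgroup (Fin n → ℤ)) :
    Set ((Fin n ⊕ Fin n) → ℤ) :=
  {w | ∃ u ∈ L, w = Sum.elim u (-u)}

/-- For every subgroup `L ⊆ ℤ^n`, the lattice ideal of the Lawrence lifting
`Λ(L) ⊆ ℤ^{2n}`, computed in `S = k[x_1,…,x_n,y_1,…,y_n]`, equals the Lawrence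
ideal `J_L = ⟨ x^a y^b − x^b y^a : a − b ∈ L ⟩`. -/
theorem latticeIdeal_lawrenceLifting_eq_lawrenceIdeal
    (k : Type*) [Field k] (n : ℕ) (hn : 1 ≤ n) (L : AddSubgroup (Fin n → ℤ)) :
    Ideal.span {p : MvPolynomial (Fin n ⊕ Fin n) k |
        ∃ a₁ a₂ b₁ b₂ : Fin n → ℕ,
          (Sum.elim (fun i => (a₁ i : ℤ) - b₁ i) (fun i => (a₂ i : ℤ) - b₂ i))
              ∈ lawrenceLifting n L ∧
          p = (∏ i, X (Sum.inl i) ^ a₁ i) * (∏ i, X (Sum.inr i) ^ a₂ i)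
              - (∏ i, X (Sum.inl i) ^ b₁ i) * (∏ i, X (Sum.inr i) ^ b₂ i)}
      = Ideal.span {p : MvPolynomial (Fin n ⊕ Fin n) k |
        ∃ a b : Fin n → ℕ,
          (fun i => (a i : ℤ) - b i) ∈ L ∧
          p = (∏ i, X (Sum.inl i) ^ a i) * (∏ i, X (Sum.inr i) ^ b i)
              - (∏ i, X (Sum.inl i) ^ b i) * (∏ i, X (Sum.inr i) ^ a i)} := by
  apply le_antisymm
  · rw [Ideal.span_le]
    rintro p ⟨a₁, a₂, b₁, b₂, ⟨u, huL, hw⟩, rfl⟩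
    have h1 : ∀ i, (a₁ i : ℤ) - b₁ i = u i := fun i => congrFun hw (Sum.inl i)
    have h2 : ∀ i, (a₂ i : ℤ) - b₂ i = -u i := fun i => congrFun hw (Sum.inr i)
    set a : Fin n → ℕ := fun i => (u i).toNat with ha
    set b : Fin n → ℕ := fun i => (-u i).toNat with hb
    set c : Fin n → ℕ := fun i => a₁ i - a i with hc
    set d : Fin n → ℕ := fun i => a₂ i - b i with hd
    have ea1 : ∀ i, a₁ i = c i + a i := fun i => by
      have := h1 i; have := h2 i; simp only [ha, hb, hc]; omega
    have eb1 : ∀ i, b₁ i = c i + b i := fun i => by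
      have := h1 i; have := h2 i; simp only [ha, hb, hc]; omega
    have ea2 : ∀ i, a₂ i = d i + b i := fun i => by
      have := h1 i; have := h2 i; simp only [ha, hb, hd]; omega
    have eb2 : ∀ i, b₂ i = d i + a i := fun i => by
      have := h1 i; have := h2 i; simp only [ha, hb, hd]; omega
    have hab : (fun i => (a i : ℤ) - b i) ∈ L := by
      have : (fun i => (a i : ℤ) - b i) = u := by
        funext i; have := h1 i; have := h2 i; simp only [ha, hb]; omega
      rw [this]; exact huL
    have key : (∏ i, X (Sum.inl i) ^ a₁ i : MvPolynomial (Fin n ⊕ Fin n) k)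
          * (∏ i, X (Sum.inr i) ^ a₂ i)
        - (∏ i, X (Sum.inl i) ^ b₁ i) * (∏ i, X (Sum.inr i) ^ b₂ i)
        = ((∏ i, X (Sum.inl i) ^ c i) * (∏ i, X (Sum.inr i) ^ d i)) *
          ((∏ i, X (Sum.inl i) ^ a i) * (∏ i, X (Sum.inr i) ^ b i)
           - (∏ i, X (Sum.inl i) ^ b i) * (∏ i, X (Sum.inr i) ^ a i)) := by
      have p1 : (∏ i, X (Sum.inl i) ^ a₁ i : MvPolynomial (Fin n ⊕ Fin n) k)
          = (∏ i, X (Sum.inl i) ^ c i) * ∏ i, X (Sum.inl i) ^ a i := by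
        rw [← Finset.prod_mul_distrib]
        exact Finset.prod_congr rfl fun i _ => by rw [← pow_add, ← ea1 i]
      have p2 : (∏ i, X (Sum.inr i) ^ a₂ i : MvPolynomial (Fin n ⊕ Fin n) k)
          = (∏ i, X (Sum.inr i) ^ d i) * ∏ i, X (Sum.inr i) ^ b i := by
        rw [← Finset.prod_mul_distrib]
        exact Finset.prod_congr rfl fun i _ => by rw [← pow_add, ← ea2 i]
      have p3 : (∏ i, X (Sum.inl i) ^ b₁ i : MvPolynomial (Fin n ⊕ Fin n) k)
          = (∏ i, X (Sum.inl i) ^ c i) * ∏ i, X (Sum.inl i) ^ b i := by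
        rw [← Finset.prod_mul_distrib]
        exact Finset.prod_congr rfl fun i _ => by rw [← pow_add, ← eb1 i]
      have p4 : (∏ i, X (Sum.inr i) ^ b₂ i : MvPolynomial (Fin n ⊕ Fin n) k)
          = (∏ i, X (Sum.inr i) ^ d i) * ∏ i, X (Sum.inr i) ^ a i := by
        rw [← Finset.prod_mul_distrib]
        exact Finset.prod_congr rfl fun i _ => by rw [← pow_add, ← eb2 i]
      rw [p1, p2, p3, p4]; ring
    rw [key]
    exact Ideal.mul_mem_left _ _ (Ideal.subset_span ⟨a, b, hab, rfl⟩)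
  · rw [Ideal.span_le]
    rintro p ⟨a, b, hab, rfl⟩
    refine Ideal.subset_span ⟨a, b, b, a, ⟨fun i => (a i : ℤ) - b i, hab, ?_⟩, rfl⟩
    funext w
    cases w with
    | inl i => simp
    | inr i => simp
end

section
/- Let k be a field and S = k[x_1,x_2,x_3,y_1,y_2,y_3]. Define S-linear maps φ_1 : S^2 → S^3 by φ_1(f, g) = (y_2 f + x_2 g, y_1 f + x_1 g, y_3 f + x_3 g), and φ_0 : S^3 → S by φ_0(h_1, h_2, h_3) = h_1 (y_1 x_3 − x_1 y_3) + h_2 (x_2 y_3 − x_3 y_2) + h_3 (x_1 y_2 − x_2 y_1). Then: (i) φ_1 is injective; (ii) the kernel of φ_0 equals the image of φ_1; and (iii) the image of φ_0 equals the ideal ⟨ x_1 y_2 − x_2 y_1, x_2 y_3 − x_3 y_2, x_1 y_3 − x_3 y_1 ⟩. In particular, 0 → S^2 → S^3 → S → S/⟨2×2 minors of [[x_1,x_2,x_3],[y_1,y_2,y_3]]⟩ → 0 is exact. -/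
open MvPolynomial

noncomputable section

variable (k : Type*) [Field k]

/-- `S = k[x₁,x₂,x₃,y₁,y₂,y₃]`, with `x_i = X 0, X 1, X 2` and `y_i = X 3, X 4, X 5`. -/
abbrev BeilinsonP2Ring := MvPolynomial (Fin 6) k

local notation "x₁" => (X 0 : BeilinsonP2Ring k)
local notation "x₂" => (X 1 : BeilinsonP2Ring k)
local notation "x₃" => (X 2 : BeilinsonP2Ring k)
local notation "y₁" => (X 3 : BeilinsonP2Ring k)
local notation "y₂" => (X 4 : BeilinsonP2Ring k)
local notation "y₃" => (X 5 : BeilinsonP2Ring k)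

/-- `φ₁ : S² → S³`, `φ₁(f, g) = (y₂ f + x₂ g, y₁ f + x₁ g, y₃ f + x₃ g)`. -/
def phiOne : (Fin 2 → BeilinsonP2Ring k) →ₗ[BeilinsonP2Ring k] (Fin 3 → BeilinsonP2Ring k) :=
  Matrix.mulVecLin !![y₂, x₂; y₁, x₁; y₃, x₃]

/-- `φ₀ : S³ → S`,
`φ₀(h₁,h₂,h₃) = h₁ (y₁x₃ − x₁y₃) + h₂ (x₂y₃ − x₃y₂) + h₃ (x₁y₂ − x₂y₁)`. -/
def phiZero : (Fin 3 → BeilinsonP2Ring k) →ₗ[BeilinsonP2Ring k] BeilinsonP2Ring k where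
  toFun h := h 0 * (y₁ * x₃ - x₁ * y₃) + h 1 * (x₂ * y₃ - x₃ * y₂) + h 2 * (x₁ * y₂ - x₂ * y₁)
  map_add' h h' := by simp only [Pi.add_apply]; ring
  map_smul' c h := by simp only [Pi.smul_apply, smul_eq_mul, RingHom.id_apply]; ring

/-!
Injectivity of `φ₁`: eliminating between its first two rows gives `(x₁y₂ − x₂y₁) f = 0`, and then
`x₁ g = 0`. Exactness in the middle: setting `x₁ = y₁ = 0` kills the minors `y₁x₃ − x₁y₃` and
`x₁y₂ − x₂y₁` but not `x₂y₃ − x₃y₂`, so every syzygy `(h₁, h₂, h₃)` of `φ₀` has `h₂ ∈ (x₁, y₁)`.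
Subtracting an element of `im φ₁` makes `h₂ = 0`, and what is left is a syzygy between
`x₁y₂ − x₂y₁` and `y₁x₃ − x₁y₃`; it is a multiple of the Koszul syzygy because the first
is prime and does not divide the second.
-/

namespace MvPolynomial

variable {σ R : Type*} [CommRing R]

theorem sub_bind₁_mem_of_forall_X_sub_mem {I : Ideal (MvPolynomial σ R)}
    {g : σ → MvPolynomial σ R} (hg : ∀ i, X i - g i ∈ I) (f : MvPolynomial σ R) :
    f - bind₁ g f ∈ I := by
  induction f using MvPolynomial.induction_on with
  | C a => simp
  | add f f' hf hf' => simpa [add_sub_add_comm] using add_mem hf hf'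
  | mul_X f i hf =>
    have : f * X i - bind₁ g (f * X i) = (f - bind₁ g f) * X i + bind₁ g f * (X i - g i) := by
      simp only [map_mul, bind₁_X_right]; ring
    rw [this]
    exact add_mem (I.mul_mem_right _ hf) (I.mul_mem_left _ (hg i))

/-- Viewed as a polynomial in `X a`, the determinant is linear with coprime coefficients. -/
theorem prime_X_mul_X_sub_X_mul_X [IsDomain R] [UniqueFactorizationMonoid R] {a b c d : σ}
    (hba : b ≠ a) (hca : c ≠ a) (hda : d ≠ a) (hbc : b ≠ c) (hbd : b ≠ d) :
    Prime (X a * X b - X c * X d : MvPolynomial σ R) := by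
  classical
  let e : MvPolynomial σ R ≃ₐ[R] Polynomial (MvPolynomial {j // j ≠ a} R) :=
    (renameEquiv R (Equiv.optionSubtypeNe a).symm).trans (optionEquivLeft R _)
  have he : e (X a * X b - X c * X d) =
      Polynomial.C (X ⟨b, hba⟩) * Polynomial.X + Polynomial.C (-(X ⟨c, hca⟩ * X ⟨d, hda⟩)) := by
    simp [e, hba, hca, hda, optionEquivLeft_X_some, optionEquivLeft_X_none]
    ring
  have hb_not_dvd : ¬ (X ⟨b, hba⟩ : MvPolynomial {j // j ≠ a} R) ∣ -(X ⟨c, hca⟩ * X ⟨d, hda⟩) := by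
    rw [dvd_neg, X_prime.dvd_mul, X_dvd_X, X_dvd_X]
    simp [hbc, hbd]
  rw [← UniqueFactorizationMonoid.irreducible_iff_prime, ← MulEquiv.irreducible_iff e.toMulEquiv]
  change Irreducible (e _)
  rw [he]
  exact Polynomial.irreducible_C_mul_X_add_C (X_ne_zero _)
    (X_prime.irreducible.isRelPrime_iff_not_dvd.mpr hb_not_dvd)

end MvPolynomial

theorem exists_eq_mul_of_mul_add_mul_eq_zero {R : Type*} [CommRing R] [IsDomain R] {a b u v : R}
    (ha : Prime a) (hab : ¬ a ∣ b) (h : u * a + v * b = 0) : ∃ c, u = c * b ∧ v = -(c * a) := by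
  obtain ⟨c, rfl⟩ : a ∣ v :=
    (ha.dvd_or_dvd ⟨-u, by linear_combination h⟩).resolve_right hab
  refine ⟨-c, mul_left_cancel₀ ha.ne_zero ?_, by ring⟩
  linear_combination h

lemma phiOne_apply (v : Fin 2 → BeilinsonP2Ring k) :
    phiOne k v = ![y₂ * v 0 + x₂ * v 1, y₁ * v 0 + x₁ * v 1, y₃ * v 0 + x₃ * v 1] := by
  ext i
  fin_cases i <;> simp [phiOne, Matrix.mulVec, dotProduct, Fin.sum_univ_two]

lemma phiZero_apply (h : Fin 3 → BeilinsonP2Ring k) :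
    phiZero k h = h 0 * (y₁ * x₃ - x₁ * y₃) + h 1 * (x₂ * y₃ - x₃ * y₂)
      + h 2 * (x₁ * y₂ - x₂ * y₁) :=
  rfl

lemma prime_minor₁₂ : Prime (x₁ * y₂ - x₂ * y₁) :=
  prime_X_mul_X_sub_X_mul_X (by decide) (by decide) (by decide) (by decide) (by decide)

lemma prime_minor₂₃ : Prime (x₂ * y₃ - x₃ * y₂) :=
  prime_X_mul_X_sub_X_mul_X (by decide) (by decide) (by decide) (by decide) (by decide)

lemma phiOne_injective : Function.Injective (phiOne k) := by
  rw [← LinearMap.ker_eq_bot, LinearMap.ker_eq_bot']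
  intro v hv
  have e0 : y₂ * v 0 + x₂ * v 1 = 0 := by simpa [phiOne_apply] using congrFun hv 0
  have e1 : y₁ * v 0 + x₁ * v 1 = 0 := by simpa [phiOne_apply] using congrFun hv 1
  have hv0 : v 0 = 0 :=
    (mul_eq_zero.mp (by linear_combination x₁ * e0 - x₂ * e1 : (x₁ * y₂ - x₂ * y₁) * v 0 = 0)
      ).resolve_left (prime_minor₁₂ k).ne_zero
  have hv1 : v 1 = 0 :=
    (mul_eq_zero.mp (by linear_combination e1 - y₁ * hv0 : x₁ * v 1 = 0)).resolve_left
      (X_ne_zero _)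
  funext i
  fin_cases i
  exacts [hv0, hv1]

lemma phiZero_comp_phiOne : phiZero k ∘ₗ phiOne k = 0 := by
  refine LinearMap.ext fun v => ?_
  rw [LinearMap.comp_apply, phiZero_apply, phiOne_apply, LinearMap.zero_apply]
  simp only [Matrix.cons_val]
  ring

lemma apply_one_mem_span_of_mem_ker_phiZero {h : Fin 3 → BeilinsonP2Ring k}
    (hh : h ∈ LinearMap.ker (phiZero k)) : h 1 ∈ Ideal.span {x₁, y₁} := by
  set g : Fin 6 → BeilinsonP2Ring k := fun i => if i = 0 ∨ i = 3 then 0 else X i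
  have hg : ∀ i, X i - g i ∈ Ideal.span {x₁, y₁} := by
    intro i
    by_cases hi : i = 0 ∨ i = 3
    · rcases hi with rfl | rfl <;> simpa [g] using Ideal.subset_span (by simp)
    · simp [g, hi]
  have hsubst : bind₁ g (h 1) * (x₂ * y₃ - x₃ * y₂) = 0 := by
    have := congrArg (bind₁ g) hh
    simp only [phiZero_apply, map_add, map_mul, map_sub, bind₁_X_right, map_zero, g] at this
    simp only [Fin.isValue, Fin.reduceEq, or_self, ↓reduceIte, true_or, or_true] at this
    linear_combination this
  have hsubst_zero : bind₁ g (h 1) = 0 :=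
    (mul_eq_zero.mp hsubst).resolve_right (prime_minor₂₃ k).ne_zero
  simpa [hsubst_zero] using sub_bind₁_mem_of_forall_X_sub_mem hg (h 1)

lemma mem_range_phiOne_of_apply_one_eq_zero {h : Fin 3 → BeilinsonP2Ring k}
    (hh : h ∈ LinearMap.ker (phiZero k)) (h1 : h 1 = 0) : h ∈ LinearMap.range (phiOne k) := by
  have hsyz : h 2 * (x₁ * y₂ - x₂ * y₁) + h 0 * (y₁ * x₃ - x₁ * y₃) = 0 := by
    rw [LinearMap.mem_ker, phiZero_apply, h1] at hh
    linear_combination hh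
  have hndvd : ¬ x₁ * y₂ - x₂ * y₁ ∣ y₁ * x₃ - x₁ * y₃ := by
    -- at `x₃ = y₁ = 1`, all other variables `0`, the divisor vanishes and the dividend does not
    intro hdvd
    simpa using map_dvd (eval fun i => if i = 2 ∨ i = 3 then (1 : k) else 0) hdvd
  obtain ⟨c, hc2, hc0⟩ := exists_eq_mul_of_mul_add_mul_eq_zero (prime_minor₁₂ k) hndvd hsyz
  refine ⟨![-c * x₁, c * y₁], funext fun i => ?_⟩
  fin_cases i <;> simp [phiOne_apply, h1, hc2, hc0] <;> ring

lemma ker_phiZero_eq_range_phiOne : LinearMap.ker (phiZero k) = LinearMap.range (phiOne k) := by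
  refine le_antisymm (fun h hh => ?_) (LinearMap.range_le_ker_iff.mpr (phiZero_comp_phiOne k))
  obtain ⟨p, q, hpq⟩ := Ideal.mem_span_pair.mp (apply_one_mem_span_of_mem_ker_phiZero k hh)
  have hsub : h - phiOne k ![q, p] ∈ LinearMap.range (phiOne k) := by
    apply mem_range_phiOne_of_apply_one_eq_zero k
    · exact sub_mem hh (LinearMap.range_le_ker_iff.mpr (phiZero_comp_phiOne k) ⟨_, rfl⟩)
    · simp [phiOne_apply, ← hpq]
      ring
  simpa using add_mem hsub (LinearMap.mem_range_self (phiOne k) ![q, p])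

lemma range_phiZero :
    LinearMap.range (phiZero k)
      = Ideal.span {x₁ * y₂ - x₂ * y₁, x₂ * y₃ - x₃ * y₂, x₁ * y₃ - x₃ * y₁} := by
  have hlin : phiZero k = Fintype.linearCombination (BeilinsonP2Ring k)
      ![y₁ * x₃ - x₁ * y₃, x₂ * y₃ - x₃ * y₂, x₁ * y₂ - x₂ * y₁] := by
    ext h
    simp [Fintype.linearCombination_apply, Fin.sum_univ_three, phiZero_apply]
  have hneg : y₁ * x₃ - x₁ * y₃ = -(x₁ * y₃ - x₃ * y₁) := by ring
  rw [hlin, Fintype.range_linearCombination, Matrix.range_cons, Matrix.range_cons,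
    Matrix.range_cons_empty, hneg, Set.singleton_union, Set.singleton_union]
  change Ideal.span _ = Ideal.span _
  rw [Ideal.span_insert, Ideal.span_insert, Ideal.span_singleton_neg, Ideal.span_insert,
    Ideal.span_insert, sup_comm, sup_assoc]
  exact sup_left_comm _ _ _

/-- The complex `0 → S² → S³ → S → S/J_L → 0` from the cellular resolution of the
diagonal of `ℙ²` is exact: `φ₁` is injective, `ker φ₀ = im φ₁`, and the image of
`φ₀` is the ideal of 2×2 minors of `[[x₁,x₂,x₃],[y₁,y₂,y₃]]`. -/
theorem beilinson_P2_cellular_resolution_exact :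
    Function.Injective (phiOne k)
      ∧ LinearMap.ker (phiZero k) = LinearMap.range (phiOne k)
      ∧ LinearMap.range (phiZero k)
          = Ideal.span {x₁ * y₂ - x₂ * y₁, x₂ * y₃ - x₃ * y₂, x₁ * y₃ - x₃ * y₁} :=
  ⟨phiOne_injective k, ker_phiZero_eq_range_phiOne k, range_phiZero k⟩

end
end

section
/- Let k be a field, S = k[x_1,x_2,x_3,y_1,y_2,y_3], and let L = { u ∈ ℤ^3 : u_1 + u_2 + u_3 = 0 } (the lattice of principal divisors of ℙ^2). Then the Lawrence ideal J_L ⊆ S equals the ideal generated by the three 2×2 minors of the matrix [[x_1,x_2,x_3],[y_1,y_2,y_3]], namely J_L = ⟨ x_1 y_2 − x_2 y_1, x_1 y_3 − x_3 y_1, x_2 y_3 − x_3 y_2 ⟩. -/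
open MvPolynomial

namespace LawrenceP2

variable (k : Type*) [Field k]

noncomputable def M (a b : Fin 3 → ℕ) : MvPolynomial (Fin 3 ⊕ Fin 3) k :=
  (∏ i, X (Sum.inl i) ^ a i) * (∏ i, X (Sum.inr i) ^ b i)

noncomputable def I : Ideal (MvPolynomial (Fin 3 ⊕ Fin 3) k) :=
  Ideal.span { X (Sum.inl 0) * X (Sum.inr 1) - X (Sum.inl 1) * X (Sum.inr 0),
    X (Sum.inl 0) * X (Sum.inr 2) - X (Sum.inl 2) * X (Sum.inr 0),
    X (Sum.inl 1) * X (Sum.inr 2) - X (Sum.inl 2) * X (Sum.inr 1) }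

lemma gen_mem (i j : Fin 3) (hij : i ≠ j) :
    X (Sum.inl i) * X (Sum.inr j) - X (Sum.inl j) * X (Sum.inr i) ∈ I k := by
  have h1 : (X (Sum.inl 0) * X (Sum.inr 1) - X (Sum.inl 1) * X (Sum.inr 0) :
      MvPolynomial (Fin 3 ⊕ Fin 3) k) ∈ I k := Ideal.subset_span (by simp)
  have h2 : (X (Sum.inl 0) * X (Sum.inr 2) - X (Sum.inl 2) * X (Sum.inr 0) :
      MvPolynomial (Fin 3 ⊕ Fin 3) k) ∈ I k := Ideal.subset_span (by simp)
  have h3 : (X (Sum.inl 1) * X (Sum.inr 2) - X (Sum.inl 2) * X (Sum.inr 1) :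
      MvPolynomial (Fin 3 ⊕ Fin 3) k) ∈ I k := Ideal.subset_span (by simp)
  fin_cases i <;> fin_cases j <;> simp_all <;>
    first
      | exact h1 | exact h2 | exact h3
      | (rw [show ∀ p q : MvPolynomial (Fin 3 ⊕ Fin 3) k, p - q = -(q - p) by intros; ring]
         <;> exact neg_mem ‹_›)

lemma prod_single (s : Fin 3 → Fin 3 ⊕ Fin 3) (i : Fin 3) :
    (∏ t, X (s t) ^ (Pi.single i 1 : Fin 3 → ℕ) t) = (X (s i) : MvPolynomial (Fin 3 ⊕ Fin 3) k) := by
  rw [Finset.prod_eq_single i]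
  · simp
  · intro t _ ht; simp [Pi.single_apply, ht]
  · simp

lemma M_add_single (a b : Fin 3 → ℕ) (i j : Fin 3) :
    M k (a + Pi.single i 1) (b + Pi.single j 1)
      = X (Sum.inl i) * X (Sum.inr j) * M k a b := by
  unfold M
  have hx : (∏ t, X (Sum.inl t) ^ ((a + Pi.single i 1 : Fin 3 → ℕ) t))
      = (∏ t, (X (Sum.inl t) : MvPolynomial (Fin 3 ⊕ Fin 3) k) ^ a t) * X (Sum.inl i) := by
    rw [← prod_single k (fun t => Sum.inl t) i, ← Finset.prod_mul_distrib]
    exact Finset.prod_congr rfl fun t _ => by simp [Pi.add_apply, pow_add]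
  have hy : (∏ t, X (Sum.inr t) ^ ((b + Pi.single j 1 : Fin 3 → ℕ) t))
      = (∏ t, (X (Sum.inr t) : MvPolynomial (Fin 3 ⊕ Fin 3) k) ^ b t) * X (Sum.inr j) := by
    rw [← prod_single k (fun t => Sum.inr t) j, ← Finset.prod_mul_distrib]
    exact Finset.prod_congr rfl fun t _ => by simp [Pi.add_apply, pow_add]
  rw [hx, hy]; ring

lemma swap_mem (a b : Fin 3 → ℕ) (i j : Fin 3) (hij : i ≠ j) :
    M k (a + Pi.single i 1) (b + Pi.single j 1)
      - M k (a + Pi.single j 1) (b + Pi.single i 1) ∈ I k := by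
  rw [M_add_single, M_add_single,
    show X (Sum.inl i) * X (Sum.inr j) * M k a b - X (Sum.inl j) * X (Sum.inr i) * M k a b
      = (X (Sum.inl i) * X (Sum.inr j) - X (Sum.inl j) * X (Sum.inr i)) * M k a b by ring]
  exact Ideal.mul_mem_right _ _ (gen_mem k i j hij)

lemma key (d : ℕ) : ∀ a b a' b' : Fin 3 → ℕ,
    (∀ t, a t + b t = a' t + b' t) →
    (∑ t, a t = ∑ t, a' t) →
    (∑ t, ((a t - a' t) + (a' t - a t)) ≤ d) →
    M k a b - M k a' b' ∈ I k := by
  induction d with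
  | zero =>
    intro a b a' b' hpt _ hdist
    have ha : a = a' := by
      funext t
      have := Finset.sum_eq_zero_iff.mp (Nat.le_zero.mp hdist) t (Finset.mem_univ t)
      omega
    have hb : b = b' := by
      funext t; have := hpt t; rw [ha] at this; omega
    rw [ha, hb, sub_self]; exact zero_mem _
  | succ d ih =>
    intro a b a' b' hpt hsum hdist
    by_cases haa : a = a'
    · have hb : b = b' := by
        funext t; have := hpt t; rw [haa] at this; omega
      rw [haa, hb, sub_self]; exact zero_mem _
    · -- find i with a' i < a i
      have hne : ∃ t, a t ≠ a' t := by
        by_contra h; push_neg at h; exact haa (funext h)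
      have hi : ∃ i, a' i < a i := by
        by_contra h; push_neg at h
        obtain ⟨t, ht⟩ := hne
        have : ∑ t, a t < ∑ t, a' t :=
          Finset.sum_lt_sum (fun s _ => h s) ⟨t, Finset.mem_univ t, lt_of_le_of_ne (h t) ht⟩
        omega
      have hj : ∃ j, a j < a' j := by
        by_contra h; push_neg at h
        obtain ⟨i, hi⟩ := hi
        have : ∑ t, a' t < ∑ t, a t :=
          Finset.sum_lt_sum (fun s _ => h s) ⟨i, Finset.mem_univ i, hi⟩
        omega
      obtain ⟨i, hi⟩ := hi
      obtain ⟨j, hj⟩ := hj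
      have hij : i ≠ j := by rintro rfl; omega
      have hbj : 0 < b j := by have := hpt j; omega
      set a₀ : Fin 3 → ℕ := fun t => a t - (Pi.single i 1 : Fin 3 → ℕ) t with ha₀
      set b₀ : Fin 3 → ℕ := fun t => b t - (Pi.single j 1 : Fin 3 → ℕ) t with hb₀
      have haeq : a = a₀ + Pi.single i 1 := by
        funext t; simp only [Pi.add_apply, ha₀, Pi.single_apply]
        by_cases h : t = i <;> simp [h] <;> omega
      have hbeq : b = b₀ + Pi.single j 1 := by
        funext t; simp only [Pi.add_apply, hb₀, Pi.single_apply]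
        by_cases h : t = j <;> simp [h] <;> omega
      have step1 : M k a b - M k (a₀ + Pi.single j 1) (b₀ + Pi.single i 1) ∈ I k := by
        rw [haeq, hbeq]; exact swap_mem k a₀ b₀ i j hij
      have step2 : M k (a₀ + Pi.single j 1) (b₀ + Pi.single i 1) - M k a' b' ∈ I k := by
        apply ih
        · intro t
          have h1 := hpt t
          have h4 := hpt i
          have h5 := hpt j
          simp only [Pi.add_apply, ha₀, hb₀, Pi.single_apply]
          by_cases h2 : t = i
          · simp [h2, hij]; omega
          · by_cases h3 : t = j
            · simp [h2, h3, Ne.symm hij]; omega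
            · simp [h2, h3]; omega
        · have e1 : ∑ t, (a₀ + Pi.single j 1 : Fin 3 → ℕ) t = (∑ t, a₀ t) + 1 := by
            simp only [Pi.add_apply]
            rw [Finset.sum_add_distrib, Finset.sum_pi_single']
            simp
          have e2 : ∑ t, a t = (∑ t, a₀ t) + 1 := by
            have : ∑ t, a t = ∑ t, (a₀ + Pi.single i 1 : Fin 3 → ℕ) t := by rw [← haeq]
            rw [this]
            simp only [Pi.add_apply]
            rw [Finset.sum_add_distrib, Finset.sum_pi_single']
            simp
          omega
        · have hlt : ∑ t, ((a₀ + Pi.single j 1 : Fin 3 → ℕ) t - a' t + (a' t - (a₀ + Pi.single j 1 : Fin 3 → ℕ) t))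
              < ∑ t, ((a t - a' t) + (a' t - a t)) := by
            apply Finset.sum_lt_sum
            · intro t _
              simp only [Pi.add_apply, ha₀, Pi.single_apply]
              by_cases h2 : t = i
              · simp [h2, hij]; omega
              · by_cases h3 : t = j
                · simp [h2, h3, Ne.symm hij]; omega
                · simp [h2, h3]
            · refine ⟨i, Finset.mem_univ i, ?_⟩
              simp only [Pi.add_apply, ha₀, Pi.single_apply]
              simp [hij]
              omega
          omega
      have := add_mem step1 step2
      simpa using this

end LawrenceP2

/-- Let `L = { u ∈ ℤ³ : u 0 + u 1 + u 2 = 0 }` be the lattice of principal divisors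
of `ℙ²`.  The Lawrence ideal `J_L ⊆ S = k[x₁,x₂,x₃,y₁,y₂,y₃]` equals the ideal
generated by the three 2×2 minors of `[[x₁,x₂,x₃],[y₁,y₂,y₃]]`.  Here `S` is the
polynomial ring on `Fin 3 ⊕ Fin 3`, with `x_i = X (Sum.inl i)` and
`y_i = X (Sum.inr i)`. -/
theorem lawrenceIdeal_P2_eq_minors
    (k : Type*) [Field k] (L : AddSubgroup (Fin 3 → ℤ))
    (hL : ∀ u : Fin 3 → ℤ, u ∈ L ↔ u 0 + u 1 + u 2 = 0) :
    Ideal.span {p : MvPolynomial (Fin 3 ⊕ Fin 3) k |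
        ∃ a b : Fin 3 → ℕ,
          (fun i => (a i : ℤ) - b i) ∈ L ∧
          p = (∏ i, X (Sum.inl i) ^ a i) * (∏ i, X (Sum.inr i) ^ b i)
              - (∏ i, X (Sum.inl i) ^ b i) * (∏ i, X (Sum.inr i) ^ a i)}
      = Ideal.span
          { X (Sum.inl 0) * X (Sum.inr 1) - X (Sum.inl 1) * X (Sum.inr 0),
            X (Sum.inl 0) * X (Sum.inr 2) - X (Sum.inl 2) * X (Sum.inr 0),
            X (Sum.inl 1) * X (Sum.inr 2) - X (Sum.inl 2) * X (Sum.inr 1) } := by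
  apply le_antisymm
  · rw [Ideal.span_le]
    rintro p ⟨a, b, hab, rfl⟩
    rw [hL] at hab
    have hs : ∑ t, a t = ∑ t, b t := by
      rw [Fin.sum_univ_three, Fin.sum_univ_three]; omega
    have h := LawrenceP2.key k (∑ t, ((a t - b t) + (b t - a t))) a b b a
      (fun t => by omega) hs le_rfl
    exact h
  · rw [Ideal.span_le]
    intro p hp
    simp only [Set.mem_insert_iff, Set.mem_singleton_iff] at hp
    rcases hp with rfl | rfl | rfl
    · exact Ideal.subset_span ⟨Pi.single 0 1, Pi.single 1 1,
        by rw [hL]; norm_num [Pi.single_apply, Fin.ext_iff],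
        by simp [Fin.prod_univ_three, Pi.single_apply]⟩
    · exact Ideal.subset_span ⟨Pi.single 0 1, Pi.single 2 1,
        by rw [hL]; norm_num [Pi.single_apply, Fin.ext_iff],
        by simp [Fin.prod_univ_three, Pi.single_apply]⟩
    · exact Ideal.subset_span ⟨Pi.single 1 1, Pi.single 2 1,
        by rw [hL]; norm_num [Pi.single_apply, Fin.ext_iff],
        by simp [Fin.prod_univ_three, Pi.single_apply]⟩
end

section
/- Let k be a field, let L ⊆ ℤ^4 be the subgroup generated by (1,1,0,−1) and (0,1,1,−1), and let M_{Λ(L)} ⊆ T be the lattice module of the Lawrence lifting. Let I_irr ⊆ S = k[x_1,…,x_4,y_1,…,y_4] be the ideal ⟨x_1, x_3⟩ ∩ ⟨x_2, x_4⟩ ∩ ⟨y_1, y_3⟩ ∩ ⟨y_2, y_4⟩ (the irrelevant ideal of Bl_{[1:0:0]}ℙ^2 × Bl_{[1:0:0]}ℙ^2). Then for every q ∈ I_irr, the element q · (x_2^{−1} y_2) of T lies in M_{Λ(L)}; that is, the cokernel of the inclusion of M_{Λ(L)} into the S-submodule of T generated by M_{Λ(L)} and x_2^{−1} y_2 is annihilated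 by I_irr. -/
/-!
`M_{Λ(L)}` contains every Laurent monomial lying above some generator `x^u y^{-u}`, so it
suffices to treat each monomial of `q` separately. Such a monomial is divisible by `x₂` or
`x₄` and by `y₁` or `y₃`, so times `x₂⁻¹ y₂` it lies above one of `1`,
`x^{-(1,1,0,-1)} y^{(1,1,0,-1)}`, `x^{-(0,1,1,-1)} y^{(0,1,1,-1)}`.
-/

open MvPolynomial

noncomputable section

/-- `S = k[x₁,…,x₄,y₁,…,y₄]`, indexed by `Fin 4 ⊕ Fin 4`. -/
abbrev LawrencePolyRing (k : Type*) [Field k] := MvPolynomial (Fin 4 ⊕ Fin 4) k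

/-- `T = k[x₁^{±1},…,x₄^{±1},y₁^{±1},…,y₄^{±1}]`, the Laurent polynomial ring. -/
abbrev LaurentRing (k : Type*) [Field k] := AddMonoidAlgebra k ((Fin 4 ⊕ Fin 4) → ℤ)

/-- The Laurent monomial with exponent vector `e`. -/
def lMono (k : Type*) [Field k] (e : (Fin 4 ⊕ Fin 4) → ℤ) : LaurentRing k :=
  AddMonoidAlgebra.single e 1

/-- The inclusion `S ⊆ T`. -/
def polyToLaurent (k : Type*) [Field k] : LawrencePolyRing k →+* LaurentRing k :=
  (MvPolynomial.eval₂Hom (algebraMap k (LaurentRing k)) fun v => lMono k (Pi.single v 1))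

/-- `T` as an `S`-module via the inclusion `S ⊆ T`. -/
instance laurentModule (k : Type*) [Field k] : Module (LawrencePolyRing k) (LaurentRing k) :=
  Module.compHom (LaurentRing k) (polyToLaurent k)

/-- The lattice module `M_{Λ(L)} ⊆ T`: the `S`-submodule generated by the Laurent
monomials `x^u y^{−u}` for `u ∈ L`. -/
def latticeModule (k : Type*) [Field k] (L : AddSubgroup (Fin 4 → ℤ)) :
    Submodule (LawrencePolyRing k) (LaurentRing k) :=
  Submodule.span (LawrencePolyRing k)
    {t : LaurentRing k | ∃ u ∈ L, t = lMono k (Sum.elim u (-u))}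

/-- The lattice of principal divisors of `Bl_{[1:0:0]}ℙ²`, generated by
`(1,1,0,−1)` and `(0,1,1,−1)`. -/
def blowupLattice : AddSubgroup (Fin 4 → ℤ) :=
  AddSubgroup.closure ({![1, 1, 0, -1], ![0, 1, 1, -1]} : Set (Fin 4 → ℤ))

namespace MvPolynomial

variable {σ R M : Type*} [CommSemiring R] [AddCommMonoid M] [Module (MvPolynomial σ R) M]

theorem smul_mem_of_forall_monomial_smul_mem {N : Submodule (MvPolynomial σ R) M}
    {p : MvPolynomial σ R} {m : M}
    (h : ∀ n ∈ p.support, (monomial n 1 : MvPolynomial σ R) • m ∈ N) :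
    p • m ∈ N := by
  rw [p.as_sum, Finset.sum_smul]
  refine Submodule.sum_mem _ fun n hn => ?_
  rw [← mul_one (coeff n p), ← C_mul_monomial, mul_smul]
  exact N.smul_mem _ (h n hn)

theorem exists_ne_zero_of_mem_ideal_span_X_pair {p : MvPolynomial σ R} {i j : σ}
    (hp : p ∈ Ideal.span {X i, X j}) {n : σ →₀ ℕ} (hn : n ∈ p.support) :
    n i ≠ 0 ∨ n j ≠ 0 := by
  rw [← Set.image_pair, mem_ideal_span_X_image] at hp
  obtain ⟨l, hl, hnl⟩ := hp n hn
  rcases hl with rfl | rfl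
  exacts [Or.inl hnl, Or.inr hnl]

end MvPolynomial

section LaurentMonomials

variable (k : Type*) [Field k]

theorem polyToLaurent_monomial (n : (Fin 4 ⊕ Fin 4) →₀ ℕ) :
    polyToLaurent k (monomial n 1) = lMono k (fun v => (n v : ℤ)) := by
  rw [polyToLaurent, eval₂Hom_monomial, map_one, one_mul, Finsupp.prod]
  simp only [lMono, AddMonoidAlgebra.single_pow, one_pow, AddMonoidAlgebra.prod_single,
    Finset.prod_const_one]
  congr 1
  funext w
  simp only [Finset.sum_apply, Pi.smul_apply, Pi.single_apply, smul_ite, smul_zero,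
    Finset.sum_ite_eq]
  split_ifs with h <;> simp_all

theorem monomial_smul_lMono (n : (Fin 4 ⊕ Fin 4) →₀ ℕ) (s : (Fin 4 ⊕ Fin 4) → ℤ) :
    (monomial n 1 : LawrencePolyRing k) • lMono k s = lMono k ((fun v => (n v : ℤ)) + s) := by
  change polyToLaurent k (monomial n 1) * lMono k s = _
  rw [polyToLaurent_monomial]
  simp only [lMono, AddMonoidAlgebra.single_mul_single, one_mul]

variable {k}

theorem lMono_mem_latticeModule_of_le {L : AddSubgroup (Fin 4 → ℤ)} {u : Fin 4 → ℤ}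
    (hu : u ∈ L) {s : (Fin 4 ⊕ Fin 4) → ℤ} (hs : Sum.elim u (-u) ≤ s) :
    lMono k s ∈ latticeModule k L := by
  let n : (Fin 4 ⊕ Fin 4) →₀ ℕ :=
    Finsupp.equivFunOnFinite.symm fun v => (s v - Sum.elim u (-u) v).toNat
  have hn : (fun v => (n v : ℤ)) + Sum.elim u (-u) = s := by
    funext v
    simp [n, max_eq_left (sub_nonneg.mpr (hs v))]
  rw [← hn, ← monomial_smul_lMono]
  exact Submodule.smul_mem _ _ (Submodule.subset_span ⟨u, hu, rfl⟩)

end LaurentMonomials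

/- Writing `x^a y^b` for the monomial of exponent `n`: `u = 0` works when `x₂ ∣ x^a`; otherwise
`x₄ ∣ x^a`, and `u = -(1,1,0,-1)` or `u = -(0,1,1,-1)` works according as `y₁` or `y₃`
divides `y^b`. -/
theorem exists_mem_blowupLattice_le (n : (Fin 4 ⊕ Fin 4) →₀ ℕ)
    (hx : n (Sum.inl 1) ≠ 0 ∨ n (Sum.inl 3) ≠ 0) (hy : n (Sum.inr 0) ≠ 0 ∨ n (Sum.inr 2) ≠ 0) :
    ∃ u ∈ blowupLattice, Sum.elim u (-u) ≤
      (fun v => (n v : ℤ)) + Sum.elim (-(Pi.single 1 1) : Fin 4 → ℤ) (Pi.single 1 1) := by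
  have ha : (![1, 1, 0, -1] : Fin 4 → ℤ) ∈ blowupLattice :=
    AddSubgroup.subset_closure (by simp)
  have hb : (![0, 1, 1, -1] : Fin 4 → ℤ) ∈ blowupLattice :=
    AddSubgroup.subset_closure (by simp)
  by_cases hx₂ : n (Sum.inl 1) ≠ 0
  · refine ⟨0, zero_mem _, ?_⟩
    rintro (i | i) <;> fin_cases i <;> simp <;> omega
  have hx₄ := hx.resolve_left hx₂
  rcases hy with hy₁ | hy₃
  · refine ⟨-![1, 1, 0, -1], neg_mem ha, ?_⟩
    rintro (i | i) <;> fin_cases i <;> simp <;> omega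
  · refine ⟨-![0, 1, 1, -1], neg_mem hb, ?_⟩
    rintro (i | i) <;> fin_cases i <;> simp <;> omega

/-- Let `I_irr = ⟨x₁,x₃⟩ ∩ ⟨x₂,x₄⟩ ∩ ⟨y₁,y₃⟩ ∩ ⟨y₂,y₄⟩` be the irrelevant ideal of
`Bl_{[1:0:0]}ℙ² × Bl_{[1:0:0]}ℙ²`.  For every `q ∈ I_irr`, the element
`q · (x₂^{−1} y₂)` of `T` lies in `M_{Λ(L)}`; i.e. the cokernel of
`M_{Λ(L)} ↪ M_{Λ(L)} + S·(x₂^{−1}y₂)` is annihilated by `I_irr`. -/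
theorem irrelevant_ideal_annihilates_extra_monomial
    (k : Type*) [Field k] (q : LawrencePolyRing k)
    (hq : q ∈
      (Ideal.span {X (Sum.inl 0), X (Sum.inl 2)}
        ⊓ Ideal.span {X (Sum.inl 1), X (Sum.inl 3)}
        ⊓ Ideal.span {X (Sum.inr 0), X (Sum.inr 2)}
        ⊓ Ideal.span {X (Sum.inr 1), X (Sum.inr 3)} : Ideal (LawrencePolyRing k))) :
    polyToLaurent k q
        * lMono k (Sum.elim (-(Pi.single 1 1) : Fin 4 → ℤ) (Pi.single 1 1))
      ∈ latticeModule k blowupLattice := by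
  obtain ⟨⟨⟨-, hx⟩, hy⟩, -⟩ := hq
  change q • lMono k _ ∈ _
  refine smul_mem_of_forall_monomial_smul_mem fun n hn => ?_
  rw [monomial_smul_lMono]
  obtain ⟨u, hu, hle⟩ := exists_mem_blowupLattice_le n
    (exists_ne_zero_of_mem_ideal_span_X_pair hx hn) (exists_ne_zero_of_mem_ideal_span_X_pair hy hn)
  exact lMono_mem_latticeModule_of_le hu hle

end
end

section
/- Let k be a field and n ≥ 1. Let ψ be the k-algebra homomorphism from B = k[x_1,…,x_n, y_1,…,y_n, z_1^{±1},…,z_n^{±1}] (polynomial in the x's and y's, Laurent in the z's) to the Laurent polynomial ring T = k[x_1^{±1},…,x_n^{±1}, y_1^{±1},…,y_n^{±1}] determined by ψ(x_i) = x_i, ψ(y_i) = y_i, and ψ(z_i) = x_i y_i^{−1}. Then the kernel of ψ is the ideal ⟨ y_i z_i − x_i : i = 1, …, n ⟩ of B. -/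
noncomputable section

/-- `B = k[x₁,…,xₙ, y₁,…,yₙ, z₁^{±1},…,zₙ^{±1}]`, the monoid algebra of
`ℕⁿ × ℕⁿ × ℤⁿ` over `k`. -/
abbrev MixedRing (k : Type*) [Field k] (n : ℕ) :=
  AddMonoidAlgebra k ((Fin n → ℕ) × (Fin n → ℕ) × (Fin n → ℤ))

/-- `T = k[x₁^{±1},…,xₙ^{±1}, y₁^{±1},…,yₙ^{±1}]`, the monoid algebra of `ℤ²ⁿ`
over `k`. -/
abbrev LaurentRing2 (k : Type*) [Field k] (n : ℕ) :=
  AddMonoidAlgebra k ((Fin n → ℤ) × (Fin n → ℤ))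

variable (k : Type*) [Field k] (n : ℕ)

/-- The variable `x_i` of `B`. -/
def bX (i : Fin n) : MixedRing k n := AddMonoidAlgebra.single (Pi.single i 1, 0, 0) 1

/-- The variable `y_i` of `B`. -/
def bY (i : Fin n) : MixedRing k n := AddMonoidAlgebra.single (0, Pi.single i 1, 0) 1

/-- The variable `z_i` of `B`. -/
def bZ (i : Fin n) : MixedRing k n := AddMonoidAlgebra.single (0, 0, Pi.single i 1) 1

/-- The Laurent monomial `x_i` of `T`. -/
def tX (i : Fin n) : LaurentRing2 k n := AddMonoidAlgebra.single ((Pi.single i 1 : Fin n → ℤ), 0) 1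

/-- The Laurent monomial `y_i` of `T`. -/
def tY (i : Fin n) : LaurentRing2 k n := AddMonoidAlgebra.single (0, (Pi.single i 1 : Fin n → ℤ)) 1

/-- The Laurent monomial `x_i y_i^{−1}` of `T`. -/
def tXYinv (i : Fin n) : LaurentRing2 k n :=
  AddMonoidAlgebra.single ((Pi.single i 1 : Fin n → ℤ), -(Pi.single i 1 : Fin n → ℤ)) 1

/-! `ψ` is the map of monoid algebras induced by the exponent map `(a, b, c) ↦ (a + c, b - c)`.
Modulo the relations `xᵢ = yᵢ zᵢ` every monomial `x^a y^b z^c` equals its normal form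
`y^(a+b) z^(a+c)`, and the exponent map is injective on normal forms, with left inverse
`(v, w) ↦ (0, v + w, v)`. Hence if `ψ p = 0` then the normal form of `p` vanishes, and `p`,
being congruent to its normal form, lies in the ideal. -/

open AddMonoidAlgebra

theorem AddMonoidHom.ext_pi_nat_nat_int {ι N : Type*} [Finite ι] [DecidableEq ι] [AddCommMonoid N]
    ⦃f g : (ι → ℕ) × (ι → ℕ) × (ι → ℤ) →+ N⦄
    (hx : ∀ i, f (Pi.single i 1, 0, 0) = g (Pi.single i 1, 0, 0))
    (hy : ∀ i, f (0, Pi.single i 1, 0) = g (0, Pi.single i 1, 0))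
    (hz : ∀ i, f (0, 0, Pi.single i 1) = g (0, 0, Pi.single i 1)) :
    f = g := by
  have h₁ : f.comp (inl _ _) = g.comp (inl _ _) :=
    functions_ext' _ _ _ fun i => ext_nat (hx i)
  have h₂ : f.comp ((inr _ _).comp (inl _ _)) = g.comp ((inr _ _).comp (inl _ _)) :=
    functions_ext' _ _ _ fun i => ext_nat (hy i)
  have h₃ : f.comp ((inr _ _).comp (inr _ _)) = g.comp ((inr _ _).comp (inr _ _)) :=
    functions_ext' _ _ _ fun i => ext_int (hz i)
  ext ⟨a, b, c⟩
  have hsplit : ((a, b, c) : (ι → ℕ) × (ι → ℕ) × (ι → ℤ)) = (a, 0, 0) + (0, b, 0) + (0, 0, c) := by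
    simp
  rw [hsplit, map_add, map_add, map_add, map_add]
  exact congr_arg₂ (· + ·) (congr_arg₂ (· + ·) (DFunLike.congr_fun h₁ a)
    (DFunLike.congr_fun h₂ b)) (DFunLike.congr_fun h₃ c)

theorem AddMonoidAlgebra.algHom_ext_pi_nat_nat_int {ι R A : Type*} [Finite ι] [DecidableEq ι]
    [CommSemiring R] [CommSemiring A] [Algebra R A]
    ⦃φ₁ φ₂ : AddMonoidAlgebra R ((ι → ℕ) × (ι → ℕ) × (ι → ℤ)) →ₐ[R] A⦄
    (hx : ∀ i, φ₁ (single (Pi.single i 1, 0, 0) 1) = φ₂ (single (Pi.single i 1, 0, 0) 1))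
    (hy : ∀ i, φ₁ (single (0, Pi.single i 1, 0) 1) = φ₂ (single (0, Pi.single i 1, 0) 1))
    (hz : ∀ i, φ₁ (single (0, 0, Pi.single i 1) 1) = φ₂ (single (0, 0, Pi.single i 1) 1)) :
    φ₁ = φ₂ :=
  (lift R A _).symm.injective <| MonoidHom.toAdditiveRight.injective <|
    AddMonoidHom.ext_pi_nat_nat_int (fun i => congrArg Additive.ofMul (hx i))
      (fun i => congrArg Additive.ofMul (hy i)) (fun i => congrArg Additive.ofMul (hz i))

section

variable {ι : Type*}

def latticeMap : (ι → ℕ) × (ι → ℕ) × (ι → ℤ) →+ (ι → ℤ) × (ι → ℤ) where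
  toFun u := (fun i => u.1 i + u.2.2 i, fun i => u.2.1 i - u.2.2 i)
  map_zero' := by ext <;> simp
  map_add' _ _ := by ext <;> simp <;> ring

def normalForm : (ι → ℕ) × (ι → ℕ) × (ι → ℤ) →+ (ι → ℕ) × (ι → ℕ) × (ι → ℤ) where
  toFun u := (0, u.1 + u.2.1, fun i => u.1 i + u.2.2 i)
  map_zero' := by ext <;> simp
  map_add' _ _ := by ext <;> simp <;> ring

def normalFormSection (v : (ι → ℤ) × (ι → ℤ)) : (ι → ℕ) × (ι → ℕ) × (ι → ℤ) :=
  (0, fun i => (v.1 i + v.2 i).toNat, v.1)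

theorem normalFormSection_comp_latticeMap :
    normalFormSection ∘ latticeMap = ⇑(normalForm (ι := ι)) := by
  funext u
  ext i <;> simp [normalFormSection, latticeMap, normalForm]
  omega

end

theorem AddMonoidAlgebra.ker_mapDomainAlgHom_le {R M N P : Type*} [CommSemiring R] [AddMonoid M]
    [AddMonoid N] [AddMonoid P] {f : M →+ N} {g : M →+ P} (s : N → P) (hs : s ∘ f = g) :
    RingHom.ker (mapDomainAlgHom R R f) ≤ RingHom.ker (mapDomainAlgHom R R g) := by
  intro p hp
  rw [RingHom.mem_ker, mapDomainAlgHom_apply] at hp ⊢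
  have hcomp : mapDomain (s ∘ f) p = mapDomain s (mapDomain f p) := by
    ext; simp [Finsupp.mapDomain_comp]
  rw [← hs, hcomp, hp, mapDomain_zero]

section

variable {k : Type*} [Field k] {n : ℕ}

theorem eq_mapDomainAlgHom_latticeMap {ψ : MixedRing k n →ₐ[k] LaurentRing2 k n}
    (hx : ∀ i, ψ (bX k n i) = tX k n i) (hy : ∀ i, ψ (bY k n i) = tY k n i)
    (hz : ∀ i, ψ (bZ k n i) = tXYinv k n i) :
    ψ = mapDomainAlgHom k k latticeMap := by
  refine algHom_ext_pi_nat_nat_int (fun i => (hx i).trans ?_) (fun i => (hy i).trans ?_)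
    (fun i => (hz i).trans ?_) <;>
  · simp only [tX, tY, tXYinv, mapDomainAlgHom_apply, mapDomain_single]
    congr 1
    ext <;> simp [latticeMap, Pi.single_apply]

variable (k n) in
def relationIdeal : Ideal (MixedRing k n) :=
  Ideal.span (Set.range fun i => bY k n i * bZ k n i - bX k n i)

theorem tY_mul_tXYinv (i : Fin n) : tY k n i * tXYinv k n i = tX k n i := by
  rw [tY, tXYinv, tX, single_mul_single, mul_one]
  congr 1
  ext <;> simp

theorem mkₐ_comp_mapDomainAlgHom_normalForm :
    (Ideal.Quotient.mkₐ k (relationIdeal k n)).comp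
      (mapDomainAlgHom k k normalForm) =
    Ideal.Quotient.mkₐ k (relationIdeal k n) := by
  refine algHom_ext_pi_nat_nat_int (fun i => ?_) (fun i => ?_) (fun i => ?_)
  · have hyz : single (normalForm (Pi.single i 1, 0, 0)) 1 = bY k n i * bZ k n i := by
      rw [bY, bZ, single_mul_single, mul_one]
      congr 1
      ext <;> simp [normalForm, Pi.single_apply]
    simp only [AlgHom.comp_apply, mapDomainAlgHom_apply, mapDomain_single, hyz,
      Ideal.Quotient.mkₐ_eq_mk]
    exact Ideal.Quotient.eq.2 (Ideal.subset_span ⟨i, rfl⟩)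
  all_goals
    simp only [AlgHom.comp_apply, mapDomainAlgHom_apply, mapDomain_single]
    congr 3
    ext <;> simp [normalForm]

theorem sub_mapDomainAlgHom_normalForm_mem_relationIdeal (p : MixedRing k n) :
    p - mapDomainAlgHom k k normalForm p ∈ relationIdeal k n :=
  Ideal.Quotient.eq.1 (congr($(mkₐ_comp_mapDomainAlgHom_normalForm (k := k) (n := n)) p)).symm

end

theorem kernel_of_lattice_module_map
    (ψ : MixedRing k n →ₐ[k] LaurentRing2 k n)
    (hx : ∀ i, ψ (bX k n i) = tX k n i)
    (hy : ∀ i, ψ (bY k n i) = tY k n i)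
    (hz : ∀ i, ψ (bZ k n i) = tXYinv k n i) :
    RingHom.ker (ψ : MixedRing k n →+* LaurentRing2 k n)
      = Ideal.span (Set.range fun i => bY k n i * bZ k n i - bX k n i) := by
  refine le_antisymm (fun p hp => ?_) (Ideal.span_le.2 ?_)
  · rw [eq_mapDomainAlgHom_latticeMap hx hy hz] at hp
    have hnf : mapDomainAlgHom k k normalForm p = 0 :=
      ker_mapDomainAlgHom_le _ normalFormSection_comp_latticeMap hp
    simpa [hnf, relationIdeal] using sub_mapDomainAlgHom_normalForm_mem_relationIdeal p
  · rintro _ ⟨i, rfl⟩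
    simp [hx, hy, hz, tY_mul_tXYinv]

end
end
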